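/- For an odd prime l and integers n, m with m < n/2 and l ≥ n+1, the image of the analogous Craig lattice A_n^{(m,l)} under coordinatewise reduction modulo 2 is exactly the even-weight binary code {c ∈ F_2^{n+1} : c_0 + c_1 + ... + c_n = 0}. -/
import Mathlib


open Finset

noncomputable def derAt1 (n i : ℕ) : (Fin (n + 1) → ℤ) →ₗ[ℤ] ℤ :=
  ∑ j : Fin (n + 1), (((j : ℕ).descFactorial i : ℤ)) • LinearMap.proj j

noncomputable def craigLat (n m l : ℕ) : Submodule ℤ (Fin (n + 1) → ℤ) :=
  LinearMap.ker (derAt1 n 0) ⊓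
    ⨅ i ∈ Finset.Ioo 0 m, Submodule.comap (derAt1 n i) (Ideal.span {(l : ℤ)})

/-- Coordinatewise reduction modulo 2, as a ℤ-linear map. -/
noncomputable def mod2 (N : ℕ) : (Fin N → ℤ) →ₗ[ℤ] (Fin N → ZMod 2) :=
  LinearMap.pi fun i => (Int.castAddHom (ZMod 2)).toIntLinearMap.comp (LinearMap.proj i)

lemma derAt1_apply (n i : ℕ) (x : Fin (n + 1) → ℤ) :
    derAt1 n i x = ∑ j : Fin (n + 1), ((j : ℕ).descFactorial i : ℤ) * x j := by
  simp [derAt1]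

lemma mod2_apply (N : ℕ) (x : Fin N → ℤ) (i : Fin N) :
    mod2 N x i = ((x i : ℤ) : ZMod 2) := rfl

/-- For an odd prime `l ≥ n+1` and `m < n/2`, the image of the analogous Craig lattice
`A_n^{(m,l)}` under coordinatewise reduction mod 2 is exactly the even-weight binary
`[n+1, n, 2]` code. -/
theorem craig_mod2_image (n m l : ℕ) (hm : 0 < m) (hmn : 2 * m < n)
    (hl : n + 1 ≤ l) (hlp : l.Prime) (hlodd : Odd l) :
    (mod2 (n + 1)) '' (craigLat n m l : Set (Fin (n + 1) → ℤ))
      = {c : Fin (n + 1) → ZMod 2 | ∑ i, c i = 0} := by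
  have hl2 : ((l : ℤ) : ZMod 2) = 1 := by
    obtain ⟨k, hk⟩ := hlodd
    subst hk
    push_cast
    rw [show ((2 : ZMod 2)) = 0 from by decide]
    ring
  ext c
  simp only [Set.mem_image, Set.mem_setOf_eq, SetLike.mem_coe]
  constructor
  · rintro ⟨x, hx, rfl⟩
    obtain ⟨h0, -⟩ := Submodule.mem_inf.mp hx
    have h0' : ∑ j, x j = 0 := by
      have := h0
      rw [LinearMap.mem_ker, derAt1_apply] at this
      simpa using this
    have : ∑ i, (mod2 (n + 1) x) i = ((∑ j, x j : ℤ) : ZMod 2) := by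
      simp [mod2_apply]
    rw [this, h0']
    simp
  · intro hc
    set v : Fin (n + 1) → ℤ := fun j => ((c j).val : ℤ) with hv
    set s : ℤ := ∑ j, v j with hs
    have hscast : ((s : ℤ) : ZMod 2) = 0 := by
      rw [hs]
      push_cast
      rw [show (∑ j, (((c j).val : ℤ) : ZMod 2)) = ∑ j, c j from by
        refine Finset.sum_congr rfl fun j _ => ?_
        push_cast
        simp [ZMod.natCast_val, ZMod.cast_id]]
      exact hc
    set u : Fin (n + 1) → ℤ := fun j => v j - (if j = 0 then s else 0) with hu
    refine ⟨fun j => (l : ℤ) * u j, ?_, ?_⟩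
    · rw [craigLat, Submodule.mem_inf]
      constructor
      · rw [LinearMap.mem_ker, derAt1_apply]
        simp only [Nat.descFactorial_zero, Nat.cast_one, one_mul]
        rw [← Finset.mul_sum, hu]
        have : ∑ j : Fin (n + 1), (v j - (if j = 0 then s else 0)) = s - s := by
          rw [Finset.sum_sub_distrib, Finset.sum_ite_eq' Finset.univ (0 : Fin (n + 1))]
          simp [hs]
        rw [this]
        ring
      · simp only [Submodule.mem_iInf]
        intro i hi
        rw [Submodule.mem_comap, derAt1_apply, Ideal.mem_span_singleton]
        refine Finset.dvd_sum fun j _ => ?_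
        exact Dvd.dvd.mul_left (Dvd.intro (u j) rfl) _
    · funext i
      rw [mod2_apply]
      show (((l : ℤ) * u i : ℤ) : ZMod 2) = c i
      rw [Int.cast_mul, hl2, one_mul]
      have hvi : ((v i : ℤ) : ZMod 2) = c i := by
        rw [hv]
        push_cast
        simp [ZMod.natCast_val, ZMod.cast_id]
      have hui : u i = v i - (if i = 0 then s else 0) := rfl
      rw [hui, Int.cast_sub, hvi, apply_ite (fun z : ℤ => (z : ZMod 2)), hscast]
      simp
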